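/- Let 1 ≤ k < N and let S₁, S₂ be k-dimensional linear subspaces of ℝ^N with orthogonal complements S₁ᗮ, S₂ᗮ (of dimension N − k). Then: (i) for any orthonormal bases of the four subspaces, |det(⟨orthonormal basis of S₁, orthonormal basis of S₂⟩)| = |det(⟨orthonormal basis of S₁ᗮ, orthonormal basis of S₂ᗮ⟩)|, i.e. the absolute Gram determinant of S₁ and S₂ equals that of S₁ᗮ and S₂ᗮ; (ii) consequently, if S₁ and S₂ are S-orthogonal (dim(S₁ ∩ S₂) = k − 1 and the Gram determinant of S₁, S₂ vanishes), then S₁ᗮ and S₂ᗮ are S-orthogonal (dim(S₁ᗮ ∩ S₂ᗮ) = N − k − 1 and the Gram determinant of S₁ᗮ, S₂ᗮ vanishes). -/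

import Mathlib

/-!
Write `A = (⟪e i, f j⟫)`, `C = (⟪e' i, f j⟫)` and `D = (⟪e' i, f' j⟫)`. Since `e, e'` and `f, f'`
each form an orthonormal basis of `ℝ^N`, Parseval's identity gives `AᵀA + CᵀC = 1` and
`CCᵀ + DDᵀ = 1`, hence `(det A)² = det (1 - CᵀC) = det (1 - CCᵀ) = (det D)²` by Sylvester's
determinant identity. For (ii), `S₁ᗮ ⊓ S₂ᗮ = (S₁ ⊔ S₂)ᗮ` and `dim (S₁ ⊔ S₂) = k + 1`.
-/

noncomputable section

open Module

/-- The Gram determinant `det(⟨e_i, f_j⟩)` of two `k`-tuples of vectors. -/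
def gramDet {k N : ℕ} (e f : Fin k → EuclideanSpace ℝ (Fin N)) : ℝ :=
  (Matrix.of fun i j => (inner ℝ (e i) (f j) : ℝ)).det

open Matrix Submodule
open scoped InnerProductSpace

section

variable {𝕜 E ι κ α β : Type*} [RCLike 𝕜] [NormedAddCommGroup E] [InnerProductSpace 𝕜 E]

theorem Orthonormal.sumElim {v : ι → E} {w : κ → E} (hv : Orthonormal 𝕜 v)
    (hw : Orthonormal 𝕜 w) (hvw : ∀ i j, ⟪v i, w j⟫_𝕜 = 0) :
    Orthonormal 𝕜 (Sum.elim v w) := by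
  classical
  rw [orthonormal_iff_ite] at hv hw ⊢
  rintro (i | i) (j | j) <;> simp [hv, hw, hvw, inner_eq_zero_symm]

theorem sum_inner_mul_inner_add_sum_inner_mul_inner [Fintype ι] [Fintype κ]
    {K : Submodule 𝕜 E} [K.HasOrthogonalProjection] {v : ι → E} {w : κ → E}
    (hv : Orthonormal 𝕜 v) (hw : Orthonormal 𝕜 w)
    (hvK : K = span 𝕜 (Set.range v)) (hwK : Kᗮ = span 𝕜 (Set.range w)) (x y : E) :
    ∑ i, ⟪x, v i⟫_𝕜 * ⟪v i, y⟫_𝕜 + ∑ j, ⟪x, w j⟫_𝕜 * ⟪w j, y⟫_𝕜 = ⟪x, y⟫_𝕜 := by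
  have hvw : ∀ i j, ⟪v i, w j⟫_𝕜 = 0 := fun i j =>
    inner_right_of_mem_orthogonal (hvK ▸ subset_span (Set.mem_range_self i))
      (hwK ▸ subset_span (Set.mem_range_self j))
  have hspan : ⊤ ≤ span 𝕜 (Set.range (Sum.elim v w)) := by
    rw [Set.Sum.elim_range, span_union, ← hvK, ← hwK, sup_orthogonal_of_hasOrthogonalProjection]
  have := (OrthonormalBasis.mk (hv.sumElim hw hvw) hspan).sum_inner_mul_inner x y
  rwa [OrthonormalBasis.coe_mk, Fintype.sum_sum_type] at this

variable (𝕜) in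
def innerMatrix (v : ι → E) (w : κ → E) : Matrix ι κ 𝕜 :=
  of fun i j => ⟪v i, w j⟫_𝕜

theorem conjTranspose_innerMatrix (v : ι → E) (w : κ → E) :
    (innerMatrix 𝕜 v w)ᴴ = innerMatrix 𝕜 w v := by
  ext
  simp [innerMatrix]

theorem Orthonormal.innerMatrix_self [DecidableEq ι] {v : ι → E} (hv : Orthonormal 𝕜 v) :
    innerMatrix 𝕜 v v = 1 :=
  gram_eq_one_iff_orthonormal.mpr hv

theorem innerMatrix_mul_add_innerMatrix_mul [Fintype ι] [Fintype κ]
    {K : Submodule 𝕜 E} [K.HasOrthogonalProjection] {v : ι → E} {w : κ → E}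
    (hv : Orthonormal 𝕜 v) (hw : Orthonormal 𝕜 w)
    (hvK : K = span 𝕜 (Set.range v)) (hwK : Kᗮ = span 𝕜 (Set.range w))
    (u : α → E) (z : β → E) :
    innerMatrix 𝕜 u v * innerMatrix 𝕜 v z + innerMatrix 𝕜 u w * innerMatrix 𝕜 w z =
      innerMatrix 𝕜 u z := by
  ext a b
  exact sum_inner_mul_inner_add_sum_inner_mul_inner hv hw hvK hwK (u a) (z b)

theorem Matrix.det_conjTranspose_mul_self [Fintype ι] [DecidableEq ι] (M : Matrix ι ι 𝕜) :
    (Mᴴ * M).det = (‖M.det‖ ^ 2 : ℝ) := by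
  rw [det_mul, det_conjTranspose, RCLike.star_def, RCLike.conj_mul]
  norm_cast

theorem Matrix.det_mul_conjTranspose_self [Fintype ι] [DecidableEq ι] (M : Matrix ι ι 𝕜) :
    (M * Mᴴ).det = (‖M.det‖ ^ 2 : ℝ) := by
  rw [det_mul, mul_comm, ← det_mul, det_conjTranspose_mul_self]

theorem Matrix.norm_det_eq_of_conjTranspose_mul_add [Fintype ι] [DecidableEq ι] [Fintype κ]
    [DecidableEq κ] {A : Matrix ι ι 𝕜} {C : Matrix κ ι 𝕜} {D : Matrix κ κ 𝕜}
    (hA : Aᴴ * A + Cᴴ * C = 1) (hD : C * Cᴴ + D * Dᴴ = 1) : ‖A.det‖ = ‖D.det‖ := by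
  have hsq : ((‖A.det‖ ^ 2 : ℝ) : 𝕜) = (‖D.det‖ ^ 2 : ℝ) := by
    rw [← det_conjTranspose_mul_self, ← det_mul_conjTranspose_self, eq_sub_of_add_eq hA,
      eq_sub_of_add_eq' hD, det_one_sub_mul_comm]
  exact (pow_left_inj₀ (norm_nonneg _) (norm_nonneg _) two_ne_zero).mp (RCLike.ofReal_inj.mp hsq)

theorem Submodule.finrank_inf_orthogonal_add_finrank_add_finrank [FiniteDimensional 𝕜 E]
    (K₁ K₂ : Submodule 𝕜 E) :
    finrank 𝕜 ↥(K₁ᗮ ⊓ K₂ᗮ) + finrank 𝕜 K₁ + finrank 𝕜 K₂ =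
      finrank 𝕜 E + finrank 𝕜 ↥(K₁ ⊓ K₂) := by
  have hsup := finrank_sup_add_finrank_inf_eq K₁ K₂
  have hcompl := (K₁ ⊔ K₂).finrank_add_finrank_orthogonal
  rw [inf_orthogonal]
  omega

end

theorem gramDet_orthogonal_complement_general {N k : ℕ} (hk : 1 ≤ k)
    (S₁ S₂ : Submodule ℝ (EuclideanSpace ℝ (Fin N)))
    (h₁ : finrank ℝ S₁ = k) (h₂ : finrank ℝ S₂ = k)
    (e f : Fin k → EuclideanSpace ℝ (Fin N))
    (he : Orthonormal ℝ e) (hf : Orthonormal ℝ f)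
    (heS : S₁ = Submodule.span ℝ (Set.range e))
    (hfS : S₂ = Submodule.span ℝ (Set.range f))
    (e' f' : Fin (N - k) → EuclideanSpace ℝ (Fin N))
    (he' : Orthonormal ℝ e') (hf' : Orthonormal ℝ f')
    (heS' : S₁ᗮ = Submodule.span ℝ (Set.range e'))
    (hfS' : S₂ᗮ = Submodule.span ℝ (Set.range f')) :
    |gramDet e f| = |gramDet e' f'| ∧
    ((finrank ℝ ↥(S₁ ⊓ S₂) = k - 1 ∧ gramDet e f = 0) →
      (finrank ℝ ↥(S₁ᗮ ⊓ S₂ᗮ) = N - k - 1 ∧ gramDet e' f' = 0)) := by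
  have hA : (innerMatrix ℝ e f)ᴴ * innerMatrix ℝ e f +
      (innerMatrix ℝ e' f)ᴴ * innerMatrix ℝ e' f = 1 := by
    rw [conjTranspose_innerMatrix, conjTranspose_innerMatrix,
      innerMatrix_mul_add_innerMatrix_mul he he' heS heS', hf.innerMatrix_self]
  have hD : innerMatrix ℝ e' f * (innerMatrix ℝ e' f)ᴴ +
      innerMatrix ℝ e' f' * (innerMatrix ℝ e' f')ᴴ = 1 := by
    rw [conjTranspose_innerMatrix, conjTranspose_innerMatrix,
      innerMatrix_mul_add_innerMatrix_mul hf hf' hfS hfS', he'.innerMatrix_self]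
  -- `gramDet v w` unfolds to `(innerMatrix ℝ v w).det`, and `‖·‖` to `|·|` on `ℝ`.
  have habs : |gramDet e f| = |gramDet e' f'| := norm_det_eq_of_conjTranspose_mul_add hA hD
  refine ⟨habs, fun ⟨hdim, hzero⟩ => ⟨?_, ?_⟩⟩
  · have hcount := finrank_inf_orthogonal_add_finrank_add_finrank S₁ S₂
    rw [h₁, h₂, hdim, finrank_euclideanSpace_fin] at hcount
    omega
  · rwa [hzero, abs_zero, eq_comm, abs_eq_zero] at habs

/-- **Hodge duality for Gram determinants and S-orthogonality**: for `k`-dimensional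
subspaces `S₁, S₂ ⊆ ℝ^N` with orthonormal bases `e, f`, and orthonormal bases `e', f'`
of the orthogonal complements `S₁ᗮ, S₂ᗮ`,
(i) `|det(⟨e_i, f_j⟩)| = |det(⟨e'_i, f'_j⟩)|`; and
(ii) if `S₁, S₂` are S-orthogonal (`dim(S₁ ∩ S₂) = k − 1` and the Gram determinant
vanishes), then `S₁ᗮ, S₂ᗮ` are S-orthogonal. -/
theorem gramDet_orthogonal_complement {N k : ℕ} (hk : 1 ≤ k) (hkN : k < N)
    (S₁ S₂ : Submodule ℝ (EuclideanSpace ℝ (Fin N)))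
    (h₁ : finrank ℝ S₁ = k) (h₂ : finrank ℝ S₂ = k)
    (e f : Fin k → EuclideanSpace ℝ (Fin N))
    (he : Orthonormal ℝ e) (hf : Orthonormal ℝ f)
    (heS : S₁ = Submodule.span ℝ (Set.range e))
    (hfS : S₂ = Submodule.span ℝ (Set.range f))
    (e' f' : Fin (N - k) → EuclideanSpace ℝ (Fin N))
    (he' : Orthonormal ℝ e') (hf' : Orthonormal ℝ f')
    (heS' : S₁ᗮ = Submodule.span ℝ (Set.range e'))
    (hfS' : S₂ᗮ = Submodule.span ℝ (Set.range f')) :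
    |gramDet e f| = |gramDet e' f'| ∧
    ((finrank ℝ ↥(S₁ ⊓ S₂) = k - 1 ∧ gramDet e f = 0) →
      (finrank ℝ ↥(S₁ᗮ ⊓ S₂ᗮ) = N - k - 1 ∧ gramDet e' f' = 0)) :=
  gramDet_orthogonal_complement_general hk S₁ S₂ h₁ h₂ e f he hf heS hfS e' f' he' hf' heS' hfS'
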